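/- For every non-negative integer m, the function I_m(α) = ∫_{-∞}^{∞} t^m (1 + it)^{-1/2} e^{-(α/4)t^2 + it/2} dt is uniformly bounded for α ∈ (0, ∞); in particular I'(α) = −(1/4) I_2(α) is uniformly bounded for α > 0. -/

import Mathlib

/-!
For `s > 0` write `J_{m,b}(α) = ∫ tᵐ (1 + it)^{-s-b} e^{-(α/4)t² + it/2} dt`, so that
`I_m = J_{m,0}` for `s = 1/2`. Since `e^{it/2}` is its own derivative up to the factor `i/2`,
integrating the derivative of the integrand over `ℝ` gives
`J_{m,b} = 2i (m J_{m-1,b} - i(s+b) J_{m,b+1} - (α/2) J_{m+1,b})`.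
Multiplied by `α^k`, this expresses `α^k J_{m,b}` through `α^k J_{m-1,b}`, `α^k J_{m,b+1}` and
`α^{k+1} J_{m+1,b}`, each of which has a smaller value of `m + 1 - b - 2k`. Once that value is
`≤ 0`, `α^k J_{m,b}(α)` is bounded as `α → 0⁺`: for `m < b` the integrand is bounded, uniformly
in `α`, by the integrable `(1 + t²)^{-(1+s)/2}`, and for `b ≤ m` it is at most
`|t|^{m-b} e^{-αt²/4}`, whose integral is `O(α^{-(m-b+1)/2})`. So every `J_{m,b}` is bounded
near `0`, and away from `0` the Gaussian factor alone bounds it. The derivative formula is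
differentiation under the integral sign.
-/

noncomputable section

/-- `I_m(α) = ∫ℝ tᵐ (1+it)^{-1/2} e^{-(α/4)t² + it/2} dt`, principal branch square root. -/
def Imint (m : ℕ) (α : ℝ) : ℂ :=
  ∫ t : ℝ, (t : ℂ) ^ m * (1 + Complex.I * t) ^ (-(1 / 2 : ℂ)) *
    Complex.exp (-(α / 4) * t ^ 2 + Complex.I * t / 2)

open MeasureTheory Filter Topology Asymptotics Complex

section RealBounds

variable {s x r : ℝ} {m b : ℕ}

lemma pow_mul_rpow_le_pow_sub (hx : 0 ≤ x) (hxr : x ≤ r) (hr : 1 ≤ r) (hs : 0 ≤ s)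
    (hbm : b ≤ m) : x ^ m * r ^ (-s - b) ≤ x ^ (m - b) := by
  have hr0 : 0 < r := one_pos.trans_le hr
  calc x ^ m * r ^ (-s - b) ≤ x ^ (m - b) * r ^ b * r ^ (-(b : ℝ)) := by
        rw [← pow_sub_mul_pow x hbm]
        gcongr
        linarith
    _ = x ^ (m - b) := by
        rw [Real.rpow_neg hr0.le, Real.rpow_natCast, mul_assoc, mul_inv_cancel₀ (by positivity),
          mul_one]

lemma pow_mul_rpow_le_rpow (hx : 0 ≤ x) (hxr : x ≤ r) (hr : 1 ≤ r) (hmb : m < b) :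
    x ^ m * r ^ (-s - b) ≤ r ^ (-(1 + s)) := by
  have hr0 : 0 < r := one_pos.trans_le hr
  have hmb' : (m : ℝ) + 1 ≤ b := by exact_mod_cast hmb
  calc x ^ m * r ^ (-s - b) ≤ r ^ (m : ℝ) * r ^ (-s - b) := by
        rw [Real.rpow_natCast]; gcongr
    _ = r ^ (m + (-s - b)) := (Real.rpow_add hr0 _ _).symm
    _ ≤ r ^ (-(1 + s)) := Real.rpow_le_rpow_of_exponent_le hr (by linarith)

end RealBounds

lemma integrable_abs_pow_mul_exp_neg_mul_sq (p : ℕ) {c : ℝ} (hc : 0 < c) :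
    Integrable fun t : ℝ => |t| ^ p * Real.exp (-c * t ^ 2) := by
  simpa [abs_mul, Real.rpow_natCast, abs_of_pos (Real.exp_pos _)] using
    (integrable_rpow_mul_exp_neg_mul_sq hc (s := p) (by linarith [p.cast_nonneg (α := ℝ)])).abs

lemma integral_abs_pow_mul_exp_neg_sq_mul_mul_sq (p : ℕ) (a : ℝ) {c : ℝ} (hc : 0 < c) :
    ∫ t : ℝ, |t| ^ p * Real.exp (-(c ^ 2 * a) * t ^ 2) =
      (c ^ (p + 1))⁻¹ * ∫ t : ℝ, |t| ^ p * Real.exp (-a * t ^ 2) := by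
  have hscale (t : ℝ) : |t| ^ p * Real.exp (-(c ^ 2 * a) * t ^ 2) =
      (c ^ p)⁻¹ * (|c * t| ^ p * Real.exp (-a * (c * t) ^ 2)) := by
    rw [abs_mul, abs_of_pos hc]
    field_simp
    ring
  simp_rw [hscale]
  rw [integral_const_mul, Measure.integral_comp_mul_left
    (fun u : ℝ => |u| ^ p * Real.exp (-a * u ^ 2)), abs_inv, abs_of_pos hc, smul_eq_mul,
    ← mul_assoc, ← mul_inv, ← pow_succ]

lemma norm_one_add_I_mul (t : ℝ) : ‖1 + I * t‖ = √(1 + t ^ 2) := by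
  rw [norm_def, normSq_apply]; simp [sq]

lemma one_le_norm_one_add_I_mul (t : ℝ) : 1 ≤ ‖1 + I * t‖ := by
  simpa using abs_re_le_norm (1 + I * t)

lemma abs_le_norm_one_add_I_mul (t : ℝ) : |t| ≤ ‖1 + I * t‖ := by
  simpa using abs_im_le_norm (1 + I * t)

lemma one_add_I_mul_mem_slitPlane (t : ℝ) : 1 + I * t ∈ slitPlane :=
  mem_slitPlane_iff.2 (Or.inl (by simp))

lemma integrable_norm_one_add_I_mul_rpow {s : ℝ} (hs : 0 < s) :
    Integrable fun t : ℝ => ‖1 + I * t‖ ^ (-(1 + s)) := by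
  have h := integrable_rpow_neg_one_add_norm_sq (E := ℝ) (μ := volume) (r := 1 + s)
    (by simpa using hs)
  refine h.congr (.of_forall fun t => ?_)
  dsimp only
  rw [norm_one_add_I_mul, Real.sqrt_eq_rpow, ← Real.rpow_mul (by positivity), Real.norm_eq_abs,
    sq_abs]
  ring_nf

namespace Imint

def integrand (s : ℝ) (m b : ℕ) (α t : ℝ) : ℂ :=
  (t : ℂ) ^ m * (1 + I * t) ^ (-(s : ℂ) - b) * exp (-(α / 4) * t ^ 2 + I * t / 2)

def J (s : ℝ) (m b : ℕ) (α : ℝ) : ℂ :=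
  ∫ t, integrand s m b α t

variable {s α β : ℝ} {m b k : ℕ}

lemma norm_integrand (s : ℝ) (m b : ℕ) (α t : ℝ) :
    ‖integrand s m b α t‖ = |t| ^ m * ‖1 + I * t‖ ^ (-s - b) * Real.exp (-(α / 4) * t ^ 2) := by
  have hexp : (-(s : ℂ) - b) = ((-s - b : ℝ) : ℂ) := by push_cast; ring
  rw [integrand, norm_mul, norm_mul, hexp, norm_cpow_real, norm_exp]
  congr 2
  · simp
  · simp [sq]

lemma norm_integrand_le (hs : 0 ≤ s) (hβα : β ≤ α) (t : ℝ) :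
    ‖integrand s m b α t‖ ≤ |t| ^ m * Real.exp (-(β / 4) * t ^ 2) := by
  rw [norm_integrand]
  calc _ ≤ |t| ^ m * 1 * Real.exp (-(β / 4) * t ^ 2) := by
        gcongr
        exact Real.rpow_le_one_of_one_le_of_nonpos (one_le_norm_one_add_I_mul t)
          (by linarith [b.cast_nonneg (α := ℝ)])
    _ = _ := by rw [mul_one]

lemma norm_integrand_le_of_le (hs : 0 ≤ s) (hbm : b ≤ m) (α t : ℝ) :
    ‖integrand s m b α t‖ ≤ |t| ^ (m - b) * Real.exp (-(α / 4) * t ^ 2) := by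
  rw [norm_integrand]
  gcongr
  exact pow_mul_rpow_le_pow_sub (abs_nonneg t) (abs_le_norm_one_add_I_mul t)
    (one_le_norm_one_add_I_mul t) hs hbm

lemma norm_integrand_le_of_lt (hmb : m < b) (hα : 0 ≤ α) (t : ℝ) :
    ‖integrand s m b α t‖ ≤ ‖1 + I * t‖ ^ (-(1 + s)) := by
  rw [norm_integrand]
  calc _ ≤ ‖1 + I * t‖ ^ (-(1 + s)) * 1 := by
        gcongr
        · exact pow_mul_rpow_le_rpow (abs_nonneg t) (abs_le_norm_one_add_I_mul t)
            (one_le_norm_one_add_I_mul t) hmb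
        · exact Real.exp_le_one_iff.2
            (mul_nonpos_of_nonpos_of_nonneg (neg_nonpos.2 (by positivity)) (sq_nonneg t))
    _ = _ := mul_one _

lemma continuous_integrand (s : ℝ) (m b : ℕ) (α : ℝ) : Continuous (integrand s m b α) := by
  unfold integrand
  have hbase : Continuous fun t : ℝ => 1 + I * t := by fun_prop
  exact ((continuous_ofReal.pow m).mul
    (hbase.cpow continuous_const one_add_I_mul_mem_slitPlane)).mul (by fun_prop)

lemma integrable_integrand (hs : 0 ≤ s) (hα : 0 < α) (m b : ℕ) :
    Integrable (integrand s m b α) :=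
  (integrable_abs_pow_mul_exp_neg_mul_sq m (by positivity : 0 < α / 4)).mono'
    (continuous_integrand s m b α).aestronglyMeasurable
    (.of_forall fun t => by simpa [neg_div] using norm_integrand_le hs le_rfl t)

lemma hasDerivAt_integrand (s : ℝ) (m b : ℕ) (α t : ℝ) :
    HasDerivAt (integrand s m b α)
      (m * integrand s (m - 1) b α t + I * (-s - b) * integrand s m (b + 1) α t
        - α / 2 * integrand s (m + 1) b α t + I / 2 * integrand s m b α t) t := by
  have hpow : HasDerivAt (fun t : ℝ => (t : ℂ) ^ m) (m * (t : ℂ) ^ (m - 1)) t :=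
    (hasDerivAt_pow m (t : ℂ)).comp_ofReal
  have hcpow : HasDerivAt (fun t : ℝ => (1 + I * t) ^ (-(s : ℂ) - b))
      ((-(s : ℂ) - b) * (1 + I * t) ^ (-(s : ℂ) - b - 1) * I) t := by
    have hbase : HasDerivAt (fun z : ℂ => 1 + I * z) I t := by
      simpa using ((hasDerivAt_id (t : ℂ)).const_mul I).const_add 1
    exact (hbase.cpow_const (one_add_I_mul_mem_slitPlane t)).comp_ofReal
  have hexp : HasDerivAt (fun t : ℝ => exp (-(α / 4) * t ^ 2 + I * t / 2))
      (exp (-(α / 4) * t ^ 2 + I * t / 2) * (-(α / 2) * t + I / 2)) t := by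
    have h : HasDerivAt (fun z : ℂ => -(α / 4) * z ^ 2 + I * z / 2) (-(α / 2) * t + I / 2) t := by
      refine (((hasDerivAt_pow 2 (t : ℂ)).const_mul (-(α / 4 : ℂ))).add
        (((hasDerivAt_id (t : ℂ)).const_mul I).div_const 2)).congr_deriv ?_
      push_cast
      ring
    exact h.cexp.comp_ofReal
  have hsucc : (1 + I * t) ^ (-(s : ℂ) - b - 1) = (1 + I * t) ^ (-(s : ℂ) - (b + 1 : ℕ)) := by
    rw [Nat.cast_succ, sub_add_eq_sub_sub]
  refine ((hpow.mul hcpow).mul hexp).congr_deriv ?_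
  simp only [integrand, hsucc, Pi.mul_apply]
  rcases m with _ | m
  · simp; ring
  · simp only [Nat.add_sub_cancel, pow_succ]; push_cast; ring

lemma J_recurrence (hs : 0 ≤ s) (hα : 0 < α) (m b : ℕ) :
    J s m b α = 2 * I *
      (m * J s (m - 1) b α + I * (-s - b) * J s m (b + 1) α - α / 2 * J s (m + 1) b α) := by
  have h₀ := integrable_integrand hs hα m b
  have h₁ := integrable_integrand hs hα (m - 1) b
  have h₂ := integrable_integrand hs hα m (b + 1)
  have h₃ := integrable_integrand hs hα (m + 1) b
  have hzero := integral_eq_zero_of_hasDerivAt_of_integrable (hasDerivAt_integrand s m b α)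
    (by fun_prop) h₀
  rw [integral_add (by fun_prop) (by fun_prop), integral_sub (by fun_prop) (by fun_prop),
    integral_add (by fun_prop) (by fun_prop)] at hzero
  simp only [integral_const_mul] at hzero
  unfold J
  linear_combination (-2 * I) * hzero + (∫ t, integrand s m b α t) * I_sq

lemma norm_J_le_of_lt (hs : 0 < s) (hmb : m < b) (hα : 0 ≤ α) :
    ‖J s m b α‖ ≤ ∫ t : ℝ, ‖1 + I * t‖ ^ (-(1 + s)) :=
  norm_integral_le_of_norm_le (integrable_norm_one_add_I_mul_rpow hs)
    (.of_forall (norm_integrand_le_of_lt hmb hα))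

lemma norm_J_le_of_le (hs : 0 ≤ s) (hbm : b ≤ m) (hα : 0 < α) :
    ‖J s m b α‖ ≤ (√α ^ (m - b + 1))⁻¹ * ∫ t : ℝ, |t| ^ (m - b) * Real.exp (-(1 / 4) * t ^ 2) := by
  have hscale : α / 4 = √α ^ 2 * (1 / 4) := by rw [Real.sq_sqrt hα.le]; ring
  rw [← integral_abs_pow_mul_exp_neg_sq_mul_mul_sq _ _ (Real.sqrt_pos.2 hα), ← hscale]
  exact norm_integral_le_of_norm_le (integrable_abs_pow_mul_exp_neg_mul_sq _ (by positivity))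
    (.of_forall fun t => by simpa [neg_div] using norm_integrand_le_of_le hs hbm α t)

lemma isBigO_J_of_le (hs : 0 < s) (h : m + 1 ≤ b + 2 * k) :
    (fun α : ℝ => (α : ℂ) ^ k * J s m b α) =O[𝓝[>] 0] fun _ => (1 : ℝ) := by
  rcases lt_or_ge m b with hmb | hbm
  · refine IsBigO.of_bound (∫ t : ℝ, ‖1 + I * t‖ ^ (-(1 + s))) ?_
    filter_upwards [Ioc_mem_nhdsGT one_pos] with α ⟨hα₀, hα₁⟩
    rw [norm_mul, norm_pow, norm_real, Real.norm_of_nonneg hα₀.le, norm_one, mul_one]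
    calc α ^ k * ‖J s m b α‖ ≤ 1 * ∫ t : ℝ, ‖1 + I * t‖ ^ (-(1 + s)) :=
          mul_le_mul (pow_le_one₀ hα₀.le hα₁) (norm_J_le_of_lt hs hmb hα₀.le) (norm_nonneg _)
            zero_le_one
      _ = _ := one_mul _
  · refine IsBigO.of_bound (∫ t : ℝ, |t| ^ (m - b) * Real.exp (-(1 / 4) * t ^ 2)) ?_
    filter_upwards [Ioc_mem_nhdsGT one_pos] with α ⟨hα₀, hα₁⟩
    rw [norm_mul, norm_pow, norm_real, Real.norm_of_nonneg hα₀.le, norm_one, mul_one]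
    have hsqrt₀ : 0 < √α := Real.sqrt_pos.2 hα₀
    have hsqrt₁ : √α ≤ 1 := Real.sqrt_le_one.2 hα₁
    have hpow : α ^ k * (√α ^ (m - b + 1))⁻¹ ≤ 1 := by
      rw [show α ^ k = √α ^ (2 * k) by rw [pow_mul, Real.sq_sqrt hα₀.le]]
      exact mul_inv_le_one_of_le₀
        (pow_le_pow_of_le_one hsqrt₀.le hsqrt₁ (by omega : m - b + 1 ≤ 2 * k)) (by positivity)
    calc α ^ k * ‖J s m b α‖
        ≤ α ^ k * ((√α ^ (m - b + 1))⁻¹ *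
            ∫ t : ℝ, |t| ^ (m - b) * Real.exp (-(1 / 4) * t ^ 2)) := by
          gcongr; exact norm_J_le_of_le hs.le hbm hα₀
      _ ≤ 1 * ∫ t : ℝ, |t| ^ (m - b) * Real.exp (-(1 / 4) * t ^ 2) := by
          rw [← mul_assoc]
          gcongr
      _ = _ := one_mul _

lemma isBigO_J (hs : 0 < s) (m b k : ℕ) :
    (fun α : ℝ => (α : ℂ) ^ k * J s m b α) =O[𝓝[>] 0] fun _ => (1 : ℝ) := by
  suffices h : ∀ N m b k : ℕ, m + 1 ≤ b + 2 * k + N →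
      (fun α : ℝ => (α : ℂ) ^ k * J s m b α) =O[𝓝[>] 0] fun _ => (1 : ℝ) from
    h (m + 1) m b k (by omega)
  intro N
  induction N with
  | zero => exact fun m b k h => isBigO_J_of_le hs h
  | succ N ih =>
    intro m b k h
    rcases le_or_gt (m + 1) (b + 2 * k + N) with h' | h'
    · exact ih m b k h'
    have h₁ : (fun α : ℝ => (m : ℂ) * ((α : ℂ) ^ k * J s (m - 1) b α)) =O[𝓝[>] 0]
        fun _ => (1 : ℝ) := by
      rcases m with _ | m
      · simpa using isBigO_zero (E' := ℂ) (fun _ : ℝ => (1 : ℝ)) (𝓝[>] 0)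
      · exact (ih m b k (by omega)).const_mul_left _
    have h₂ := (ih m (b + 1) k (by omega)).const_mul_left (I * (-s - b))
    have h₃ := (ih (m + 1) b (k + 1) (by omega)).const_mul_left (1 / 2 : ℂ)
    refine (((h₁.add h₂).sub h₃).const_mul_left (2 * I)).congr' ?_ EventuallyEq.rfl
    filter_upwards [self_mem_nhdsWithin] with α hα
    rw [J_recurrence hs.le hα m b]
    ring

lemma exists_norm_J_le (hs : 0 < s) (m b : ℕ) : ∃ C, ∀ α, 0 < α → ‖J s m b α‖ ≤ C := by
  have hbigO := isBigO_J hs m b 0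
  simp only [pow_zero, one_mul] at hbigO
  obtain ⟨c, hc⟩ := hbigO.bound
  obtain ⟨δ, hδ, hδc⟩ := (nhdsGT_basis (0 : ℝ)).eventually_iff.1 hc
  refine ⟨max c (∫ t : ℝ, |t| ^ m * Real.exp (-(δ / 4) * t ^ 2)), fun α hα => ?_⟩
  rcases lt_or_ge α δ with hαδ | hδα
  · simpa using (hδc ⟨hα, hαδ⟩).trans (le_max_left _ _)
  · exact (norm_integral_le_of_norm_le
      (integrable_abs_pow_mul_exp_neg_mul_sq m (by positivity : 0 < δ / 4))
      (.of_forall fun t => norm_integrand_le hs.le hδα t)).trans (le_max_right _ _)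

lemma hasDerivAt_integrand_param (s : ℝ) (m b : ℕ) (a t : ℝ) :
    HasDerivAt (fun a => integrand s m b a t) (-(1 / 4) * integrand s (m + 2) b a t) a := by
  have hlin : HasDerivAt (fun a : ℝ => -((a : ℂ) / 4) * t ^ 2 + I * t / 2)
      (-(1 / 4) * (t : ℂ) ^ 2) a :=
    (((hasDerivAt_id a).ofReal_comp.div_const 4).neg.mul_const _).add_const _ |>.congr_deriv
      (by push_cast; ring)
  refine (hlin.cexp.const_mul ((t : ℂ) ^ m * (1 + I * t) ^ (-(s : ℂ) - b))).congr_deriv ?_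
  simp only [integrand]
  ring

lemma hasDerivAt_J (hs : 0 ≤ s) (hα : 0 < α) (m b : ℕ) :
    HasDerivAt (J s m b) (-(1 / 4) * J s (m + 2) b α) α := by
  have hbound : ∀ t, ∀ a ∈ Set.Ioi (α / 2), ‖-(1 / 4) * integrand s (m + 2) b a t‖ ≤
      1 / 4 * (|t| ^ (m + 2) * Real.exp (-(α / 2 / 4) * t ^ 2)) := fun t a ha => by
    rw [norm_mul]
    gcongr
    · norm_num
    · exact norm_integrand_le hs (le_of_lt ha) t
  have hderiv := hasDerivAt_integral_of_dominated_loc_of_deriv_le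
    (Ioi_mem_nhds (half_lt_self hα))
    (.of_forall fun a => (continuous_integrand s m b a).aestronglyMeasurable)
    (integrable_integrand hs hα m b)
    ((continuous_integrand s (m + 2) b α).aestronglyMeasurable.const_mul _)
    (.of_forall hbound)
    ((integrable_abs_pow_mul_exp_neg_mul_sq (m + 2) (by positivity)).const_mul _)
    (.of_forall fun t a _ => hasDerivAt_integrand_param s m b a t)
  unfold J
  rw [← integral_const_mul]
  exact hderiv.2

lemma eq_J : Imint = fun m => J (1 / 2) m 0 := by
  ext m α
  simp [Imint, J, integrand]

end Imint

theorem Imint_uniformly_bounded :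
    (∀ m : ℕ, ∃ C : ℝ, ∀ α : ℝ, 0 < α → ‖Imint m α‖ ≤ C) ∧
    (∀ α : ℝ, 0 < α → HasDerivAt (fun a : ℝ => Imint 0 a) (-(1 / 4) * Imint 2 α) α) := by
  rw [Imint.eq_J]
  exact ⟨fun m => Imint.exists_norm_J_le one_half_pos m 0,
    fun α hα => Imint.hasDerivAt_J one_half_pos.le hα 0 0⟩

end
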